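/- arXiv:1607.07529 — 2 statements merged into one kernel-verified Lean document; each statement's English description precedes it below -/
import Mathlib

section
/- Let ψ and φ be anisotropic quasilinear quadratic forms over a field F of characteristic 2, and let L be a purely transcendental field extension of F. If ψ_L is similar to a subform of φ_L, then ψ is similar to a subform of φ. -/
open scoped BigOperators

namespace QLin

variable (K : Type) [Field K]

/-- Value of the diagonal (quasilinear) quadratic form with coefficients `d` at the vector `v`. -/
def qf {n : ℕ} (d : Fin n → K) (v : Fin n → K) : K := ∑ i, d i * v i ^ 2

/-- The set `D(q)` of values represented by the diagonal form `d`. -/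
def Dset {n : ℕ} (d : Fin n → K) : Set K := Set.range (qf K d)

/-- A diagonal quadratic form is anisotropic if it has no nontrivial zero. -/
def Anis {n : ℕ} (d : Fin n → K) : Prop := ∀ v : Fin n → K, qf K d v = 0 → v = 0

/-- The isotropy index `i₀`: the maximal dimension of a totally isotropic subspace. -/
noncomputable def i0 {n : ℕ} (d : Fin n → K) : ℕ :=
  sSup {m | ∃ W : Submodule K (Fin n → K), (∀ v ∈ W, qf K d v = 0) ∧ Module.finrank K W = m}

/-- Isometry of two diagonal quadratic forms (possibly of different ambient dimensions;
an isometry forces the dimensions to agree). -/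
def Isom {n m : ℕ} (d : Fin n → K) (e : Fin m → K) : Prop :=
  ∃ φ : (Fin n → K) ≃ₗ[K] (Fin m → K), ∀ v, qf K e (φ v) = qf K d v

/-- `r` is a subform of `q` : `q ≅ r ⊥ s` for some form `s`. -/
def Subform {n m : ℕ} (r : Fin n → K) (q : Fin m → K) : Prop :=
  ∃ (k : ℕ) (s : Fin k → K), Isom K q (Fin.append r s)

/-- `d` is similar to `e` : `e ≅ a • d` for some `a ≠ 0`. -/
def Similar {n m : ℕ} (d : Fin n → K) (e : Fin m → K) : Prop :=
  ∃ a : K, a ≠ 0 ∧ Isom K (fun i => a * d i) e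

/-- `d` is similar to a subform of `q`. -/
def SimSubform {n m : ℕ} (d : Fin n → K) (q : Fin m → K) : Prop :=
  ∃ a : K, a ≠ 0 ∧ Subform K (fun i => a * d i) q

/-- Tensor product of diagonal quadratic forms. -/
def tens {n m : ℕ} (d : Fin n → K) (e : Fin m → K) : Fin (n * m) → K :=
  fun k => d (finProdFinEquiv.symm k).1 * e (finProdFinEquiv.symm k).2

/-- `q` is divisible by `π` : `q ≅ π ⊗ r` for some form `r`. -/
def Divisible {n m : ℕ} (π : Fin n → K) (q : Fin m → K) : Prop :=
  ∃ (k : ℕ) (r : Fin k → K), Isom K q (tens K π r)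

/-- The diagonal coefficients of the `s`-fold quasi-Pfister form `⟨⟨a₁,…,a_s⟩⟩ =
`⟨1,a₁⟩ ⊗ ⋯ ⊗ ⟨1,a_s⟩`: the products of the `a i` over all subsets of the index set. -/
def qPfister {s : ℕ} (a : Fin s → K) : Fin (2 ^ s) → K :=
  fun j => ∏ i : Fin s, if Nat.testBit (j : ℕ) (i : ℕ) then a i else 1

/-- `r` is (a representative of) the anisotropic part of `q`:
`r` is anisotropic and `q ≅ i₀(q)·⟨0⟩ ⊥ r`. -/
def IsAnisPart {n m : ℕ} (r : Fin n → K) (q : Fin m → K) : Prop :=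
  Anis K r ∧ ∃ k : ℕ, Isom K q (Fin.append (fun _ : Fin k => (0 : K)) r)

/-- The divisibility index `𝔡₀(q)`: the largest `s` such that the anisotropic part of `q`
is divisible by an `s`-fold quasi-Pfister form. -/
noncomputable def d0 {n : ℕ} (q : Fin n → K) : ℕ :=
  sSup {s | ∃ a : Fin s → K, (∀ i, a i ≠ 0) ∧
    ∃ (k : ℕ) (r : Fin k → K), IsAnisPart K r q ∧ Divisible K (qPfister K a) r}

/-- The norm field `N(q)`: the smallest subfield of `K` containing all squares and all
ratios of nonzero represented values of `q`. -/
def normField {n : ℕ} (d : Fin n → K) : Subfield K :=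
  Subfield.closure ((Set.range fun x : K => x ^ 2) ∪
    {z | ∃ a ∈ Dset K d, ∃ b ∈ Dset K d, b ≠ 0 ∧ z = a / b})

/-- `lndeg(q)`: the base-2 logarithm of the dimension of the norm form of `q`, i.e. the
(unique, when `q` is nonzero) `s` such that some anisotropic `s`-fold quasi-Pfister form
represents exactly the elements of the norm field of `q`. -/
noncomputable def lndeg {n : ℕ} (d : Fin n → K) : ℕ :=
  sInf {s | ∃ a : Fin s → K, (∀ i, a i ≠ 0) ∧ Anis K (qPfister K a) ∧
    Dset K (qPfister K a) = (normField K d : Set K)}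

/-- Base change of a diagonal quadratic form along a field extension `F → K`. -/
def bc (F : Type) [Field F] (K : Type) [Field K] [Algebra F K] {n : ℕ} (d : Fin n → F) :
    Fin n → K := fun i => algebraMap F K (d i)

/-- The defining polynomial of the standard affine chart of the projective quadric `{p = 0}`
attached to a diagonal form `p` of dimension `n + 2` (dehomogenized at the last variable). -/
noncomputable def chartD (F : Type) [Field F] {n : ℕ} (d : Fin (n + 2) → F) :
    MvPolynomial (Fin (n + 1)) F :=
  (∑ i : Fin (n + 1), MvPolynomial.C (d i.castSucc) * MvPolynomial.X i ^ 2) +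
    MvPolynomial.C (d (Fin.last (n + 1)))

/-- `K` is (realizes) the function field `F(p)` of the projective quadric `{p = 0}`:
`K` is generated over `F` by a point `x` of the affine chart of the quadric whose
ideal of relations is exactly the one generated by the defining equation. -/
def IsFunFld (F : Type) [Field F] {n : ℕ} (p : Fin (n + 2) → F) (K : Type) [Field K]
    [Algebra F K] : Prop :=
  ∃ x : Fin (n + 1) → K,
    RingHom.ker (MvPolynomial.aeval x : MvPolynomial (Fin (n + 1)) F →ₐ[F] K) =
      Ideal.span {chartD F p} ∧
    ∀ z : K, ∃ a b : MvPolynomial (Fin (n + 1)) F,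
      MvPolynomial.aeval x b ≠ 0 ∧ z * MvPolynomial.aeval x b = MvPolynomial.aeval x a

/-- The full diagonal polynomial of a diagonal form (the equation of the affine cone). -/
noncomputable def diagPoly (F : Type) [Field F] {n : ℕ} (d : Fin n → F) :
    MvPolynomial (Fin n) F :=
  ∑ i : Fin n, MvPolynomial.C (d i) * MvPolynomial.X i ^ 2

/-- `M` is (realizes) the affine cone function field `F[p]`, i.e. the fraction field of
`F[T₁,…,Tₙ]/(p(T))`. -/
def IsAffFunFld (F : Type) [Field F] {n : ℕ} (p : Fin n → F) (M : Type) [Field M]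
    [Algebra F M] : Prop :=
  ∃ x : Fin n → M,
    RingHom.ker (MvPolynomial.aeval x : MvPolynomial (Fin n) F →ₐ[F] M) =
      Ideal.span {diagPoly F p} ∧
    ∀ z : M, ∃ a b : MvPolynomial (Fin n) F,
      MvPolynomial.aeval x b ≠ 0 ∧ z * MvPolynomial.aeval x b = MvPolynomial.aeval x a

/-- `L` is a purely transcendental field extension of `F`. -/
def IsPurelyTransc (F L : Type) [Field F] [Field L] [Algebra F L] : Prop :=
  ∃ s : Set L, AlgebraicIndependent F (Subtype.val : s → L) ∧
    IntermediateField.adjoin F s = ⊤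

end QLin

/-!
In characteristic `2` the values of `⟨d₁, …, dₙ⟩` form the `K²`-span of the `dᵢ`, and the form is
anisotropic iff the `dᵢ` are `K²`-linearly independent. Hence, for anisotropic `r` and `q`, `r` is
a subform of `q` as soon as every coefficient of `r` is a value of `q`: extend the coefficients of
`r` to a `K²`-basis of the span of those of `q`, and compare two `K²`-bases by taking entrywise
square roots of the change-of-basis matrix.

So it suffices to descend `a ψᵢ ∈ D(φ_L)` (all `i`, some `a ∈ L×`) to `a' ψᵢ ∈ D(φ)` with
`a' ∈ F×`. Writing `L = F(x)` and clearing denominators gives identities `ψᵢ A = ∑ⱼ φⱼ Uᵢⱼ²` in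
`F[x]`. Their right-hand sides only involve monomials `x^(2e)`, so the coefficient of `x^(2e)` gives
`ψᵢ a' = ∑ⱼ φⱼ (coeff_e Uᵢⱼ)²` with `a' = coeff_(2e) A`, which is nonzero for a suitable `e`.
-/

namespace QLin

variable {K : Type} [Field K]

theorem qf_single {n : ℕ} (d : Fin n → K) (i : Fin n) : qf K d (Pi.single i 1) = d i := by
  classical
  simp [qf, Pi.single_apply]

theorem Subform.mem_Dset {n m : ℕ} {r : Fin n → K} {q : Fin m → K} (h : Subform K r q)
    (i : Fin n) : r i ∈ Dset K q := by
  obtain ⟨k, s, Φ, hΦ⟩ := h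
  refine ⟨Φ.symm (Pi.single (Fin.castAdd k i) 1), ?_⟩
  rw [← hΦ, LinearEquiv.apply_symm_apply, qf_single, Fin.append_left]

theorem Anis.mul_left {n : ℕ} {d : Fin n → K} (hd : Anis K d) {a : K} (ha : a ≠ 0) :
    Anis K (fun i => a * d i) := by
  intro v hv
  refine hd v ((mul_eq_zero.mp ?_).resolve_left ha)
  simpa only [qf, Finset.mul_sum, mul_assoc] using hv

section CharTwo

variable [CharP K 2]

variable (K) in
def sqSubfield : Subfield K := (frobenius K 2).fieldRange

theorem mem_sqSubfield {y : K} : y ∈ sqSubfield K ↔ ∃ x, x ^ 2 = y := by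
  simp [sqSubfield, frobenius_def]

theorem qf_eq_sum_smul {n : ℕ} (d v : Fin n → K) :
    qf K d v = ∑ i, (⟨v i ^ 2, mem_sqSubfield.2 ⟨v i, rfl⟩⟩ : sqSubfield K) • d i := by
  simp only [qf, Subfield.smul_def, smul_eq_mul, mul_comm]

theorem Dset_subset_span {n : ℕ} (d : Fin n → K) :
    Dset K d ⊆ Submodule.span (sqSubfield K) (Set.range d) := by
  rintro _ ⟨v, rfl⟩
  rw [qf_eq_sum_smul]
  exact Submodule.sum_mem _ fun i _ => Submodule.smul_mem _ _ (Submodule.subset_span ⟨i, rfl⟩)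

theorem Anis.linearIndependent {n : ℕ} {d : Fin n → K} (hd : Anis K d) :
    LinearIndependent (sqSubfield K) d := by
  rw [Fintype.linearIndependent_iff]
  intro g hg i
  choose μ hμ using fun j => mem_sqSubfield.1 (g j).2
  have hμg : ∀ j, (⟨μ j ^ 2, mem_sqSubfield.2 ⟨μ j, rfl⟩⟩ : sqSubfield K) = g j :=
    fun j => Subtype.ext (hμ j)
  have hμ0 := hd μ (by simpa only [qf_eq_sum_smul, hμg] using hg)
  ext
  simp [← hμ i, hμ0]

theorem qf_mulVec {N M : ℕ} (d : Fin N → K) (c : Matrix (Fin N) (Fin M) K) (v : Fin M → K) :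
    qf K d (c.mulVec v) = qf K (fun j => ∑ i, c i j ^ 2 * d i) v := by
  simp only [qf, Matrix.mulVec, dotProduct, CharTwo.sum_sq, mul_pow, Finset.mul_sum,
    Finset.sum_mul]
  rw [Finset.sum_comm]
  exact Finset.sum_congr rfl fun _ _ => Finset.sum_congr rfl fun _ _ => by ring

theorem isom_of_isUnit_det {N : ℕ} (d : Fin N → K) {c : Matrix (Fin N) (Fin N) K}
    (hc : IsUnit c.det) : Isom K (fun j => ∑ i, c i j ^ 2 * d i) d :=
  ⟨c.toLinearEquiv' (c.invertibleOfIsUnitDet hc), qf_mulVec d c⟩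

theorem isom_of_basis {N N' : ℕ} {D : Submodule (sqSubfield K) K}
    (b : Module.Basis (Fin N) (sqSubfield K) D) (b' : Module.Basis (Fin N') (sqSubfield K) D) :
    Isom K (fun j => (b' j : K)) (fun i => (b i : K)) := by
  obtain rfl : N = N' := Fin.equiv_iff_eq.1 ⟨b.indexEquiv b'⟩
  choose c hc using fun i j => mem_sqSubfield.1 (b.toMatrix b' i j).2
  have hdet : IsUnit (Matrix.of c).det := by
    have := b.invertibleToMatrix b'
    have hM : (Matrix.of c).map (frobenius K 2) = (b.toMatrix b').map (sqSubfield K).subtype := by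
      ext i j
      simp [frobenius_def, hc]
    have h := (Matrix.isUnit_det_of_invertible (b.toMatrix b')).map (sqSubfield K).subtype
    rw [RingHom.map_det, RingHom.mapMatrix_apply, ← hM, ← RingHom.mapMatrix_apply,
      ← RingHom.map_det, frobenius_def] at h
    exact (isUnit_pow_iff two_ne_zero).1 h
  convert isom_of_isUnit_det (fun i => (b i : K)) hdet using 2 with j
  calc (b' j : K) = ((∑ i, b.toMatrix b' i j • b i : D) : K) := by
        rw [b.sum_toMatrix_smul_self]
    _ = _ := by
        simp only [Submodule.coe_sum, Submodule.coe_smul, Subfield.smul_def, smul_eq_mul, ← hc,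
          Matrix.of_apply]

theorem subform_of_forall_mem_Dset {n m : ℕ} {r : Fin n → K} {q : Fin m → K} (hr : Anis K r)
    (hq : Anis K q) (h : ∀ i, r i ∈ Dset K q) : Subform K r q := by
  let D := Submodule.span (sqSubfield K) (Set.range q)
  let bq := Module.Basis.span hq.linearIndependent
  let w : Fin n → D := fun i => ⟨r i, Dset_subset_span q (h i)⟩
  have hw : LinearIndependent (sqSubfield K) w :=
    LinearIndependent.of_comp D.subtype hr.linearIndependent
  let b := Module.Basis.sumExtend hw
  have hb : ∀ i, b (Sum.inl i) = w i := fun i => by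
    simp only [b, Module.Basis.sumExtend, Module.Basis.reindex_apply, Module.Basis.coe_extend]
    rfl
  have : Module.Finite (sqSubfield K) D := Module.Finite.of_basis bq
  have := Module.Finite.finite_basis b
  have : Finite (Module.Basis.sumExtendIndex hw) :=
    Finite.of_injective _ (Sum.inr_injective (α := Fin n))
  obtain ⟨k, ⟨e⟩⟩ := Finite.exists_equiv_fin (Module.Basis.sumExtendIndex hw)
  refine ⟨k, fun t => b (Sum.inr (e.symm t)), ?_⟩
  convert isom_of_basis (b.reindex ((Equiv.sumCongr (Equiv.refl _) e).trans finSumFinEquiv)) bq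
    using 1
  · funext j
    exact congrArg Subtype.val (Module.Basis.span_apply _ j).symm
  · funext x
    induction x using Fin.addCases with
    | left i => simp [hb, w]
    | right t => simp

end CharTwo

section MvPolynomial

open MvPolynomial

variable {F : Type} [Field F] {σ : Type*}

theorem sum_C_mul_sq_eq_expand [CharP F 2] {ι : Type*} [Fintype ι] (d : ι → F)
    (c : ι → MvPolynomial σ F) :
    ∑ j, C (d j) * c j ^ 2 = expand 2 (∑ j, C (d j) * map (frobenius F 2) (c j)) := by
  simp only [map_sum, map_mul, expand_C, ← map_expand, map_frobenius_expand]

theorem exists_mul_mem_Dset_of_C_mul_eq_sum [CharP F 2] {n m : ℕ} {A : MvPolynomial σ F}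
    (hA : A ≠ 0) (ψ : Fin n → F) (φ : Fin m → F) (U : Fin n → Fin m → MvPolynomial σ F)
    (hrel : ∀ i, C (ψ i) * A = ∑ j, C (φ j) * U i j ^ 2) :
    ∃ a : F, a ≠ 0 ∧ ∀ i, a * ψ i ∈ Dset F φ := by
  by_cases hψ : ∀ i, ψ i = 0
  · exact ⟨1, one_ne_zero, fun i => ⟨0, by simp [qf, hψ i]⟩⟩
  push Not at hψ
  obtain ⟨i₀, hi₀⟩ := hψ
  set B := fun i => ∑ j, C (φ j) * map (frobenius F 2) (U i j)
  have hAB : ∀ i, C (ψ i) * A = expand 2 (B i) :=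
    fun i => (hrel i).trans (sum_C_mul_sq_eq_expand _ _)
  have hcoeff : ∀ i e, ψ i * coeff (2 • e) A = coeff e (B i) := fun i e => by
    rw [← coeff_C_mul, hAB, coeff_expand_smul 2 two_ne_zero]
  obtain ⟨e, he⟩ : ∃ e, coeff e (B i₀) ≠ 0 := by
    refine ne_zero_iff.1 fun h0 => mul_ne_zero (C_ne_zero.2 hi₀) hA ?_
    rw [hAB, h0, map_zero]
  refine ⟨coeff (2 • e) A, fun h0 => he (by rw [← hcoeff, h0, mul_zero]), fun i => ?_⟩
  refine ⟨fun j => coeff e (U i j), ?_⟩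
  simp [mul_comm _ (ψ i), hcoeff, B, qf, coeff_sum, coeff_C_mul, coeff_map, frobenius_def]

end MvPolynomial

section PurelyTranscendental

open MvPolynomial

variable {F L : Type} [Field F] [Field L] [Algebra F L] {σ : Type*} {x : σ → L}

theorem exists_common_denominator (hx : IntermediateField.adjoin F (Set.range x) = ⊤)
    {ι : Type*} [Fintype ι] (z : ι → L) :
    ∃ T : MvPolynomial σ F, aeval x T ≠ 0 ∧
      ∀ i, ∃ p : MvPolynomial σ F, z i * aeval x T = aeval x p := by
  have hfrac : ∀ i, ∃ p q : MvPolynomial σ F, aeval x q ≠ 0 ∧ z i * aeval x q = aeval x p := by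
    intro i
    obtain ⟨p, q, hpq⟩ := (IntermediateField.mem_adjoin_range_iff F x (z i)).1 (hx ▸ trivial)
    by_cases hq : aeval x q = 0
    · exact ⟨0, 1, by simp, by simp [hpq, hq]⟩
    · exact ⟨p, q, hq, by rw [hpq, div_mul_cancel₀ _ hq]⟩
  choose p q hq hpq using hfrac
  refine ⟨∏ i, q i, by simpa [map_prod] using Finset.prod_ne_zero_iff.2 fun i _ => hq i,
    fun i => ?_⟩
  obtain ⟨u, hu⟩ := Finset.dvd_prod_of_mem q (Finset.mem_univ i)
  exact ⟨p i * u, by rw [hu, map_mul, map_mul, ← mul_assoc, hpq]⟩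

theorem exists_mul_mem_Dset_of_algebraicIndependent [CharP F 2] (hind : AlgebraicIndependent F x)
    (hx : IntermediateField.adjoin F (Set.range x) = ⊤) {n m : ℕ} (ψ : Fin n → F)
    (φ : Fin m → F) {a : L} (ha : a ≠ 0)
    (h : ∀ i, a * algebraMap F L (ψ i) ∈ Dset L (bc F L φ)) :
    ∃ a' : F, a' ≠ 0 ∧ ∀ i, a' * ψ i ∈ Dset F φ := by
  choose u hu using h
  obtain ⟨T, hT, hden⟩ := exists_common_denominator hx
    (fun o : Option (Fin n × Fin m) => o.elim a fun ij => u ij.1 ij.2)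
  obtain ⟨P, hP⟩ : ∃ P, a * aeval x T = aeval x P := hden none
  choose U hU using fun i j => hden (some (i, j))
  refine exists_mul_mem_Dset_of_C_mul_eq_sum (A := P * T) ?_ ψ φ U fun i => hind ?_
  · exact fun h0 => mul_ne_zero (mul_ne_zero ha hT) hT (by rw [hP, ← map_mul, h0, map_zero])
  · have hU' : ∀ j, aeval x (U i j) = u i j * aeval x T := fun j => (hU i j).symm
    simp only [map_mul, map_sum, map_pow, aeval_C, hU', ← hP]
    calc algebraMap F L (ψ i) * (a * aeval x T * aeval x T)
        = a * algebraMap F L (ψ i) * aeval x T ^ 2 := by ring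
      _ = _ := by
        rw [← hu i, qf, Finset.sum_mul]
        exact Finset.sum_congr rfl fun j _ => by rw [bc]; ring

end PurelyTranscendental

end QLin

open QLin in
/-- Let `ψ` and `φ` be anisotropic quasilinear quadratic forms over a
field `F` of characteristic `2`, and let `L` be a purely transcendental field extension
of `F`. If `ψ_L` is similar to a subform of `φ_L`, then `ψ` is similar to a subform
of `φ`. -/
theorem statement10 (F : Type) [Field F] (h2 : (2 : F) = 0) {n m : ℕ}
    (ψ : Fin n → F) (φ : Fin m → F) (hψ : Anis F ψ) (hφ : Anis F φ)
    (L : Type) [Field L] [Algebra F L] (hL : IsPurelyTransc F L)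
    (h : SimSubform L (bc F L ψ) (bc F L φ)) :
    SimSubform F ψ φ := by
  have : CharP F 2 := (CharP.charP_iff_prime_eq_zero Nat.prime_two).2 h2
  obtain ⟨a, ha, hsub⟩ := h
  obtain ⟨S, hind, htop⟩ := hL
  obtain ⟨a', ha', hmem⟩ := exists_mul_mem_Dset_of_algebraicIndependent hind
    (by rwa [Subtype.range_coe]) ψ φ ha hsub.mem_Dset
  exact ⟨a', ha', subform_of_forall_mem_Dset (hψ.mul_left ha') hφ hmem⟩
end

section
/- Let p and q be anisotropic quasilinear quadratic forms of dimension ≥ 2 over a field F of characteristic 2. If q_{F(p)} is isotropic, then i₀(q_{F(p)}) ≤ dim(q) − dim(p) + i₁(p). -/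
open scoped BigOperators

/-!
In characteristic `2` the map `v ↦ q(v)` is additive, hence `K`-linear into `K` made a
`K`-module through Frobenius, with image the `K²`-span `D(q_K)` of the coefficients.
Rank–nullity gives `i₀(q_K) = dim q - dim_{K²} D(q_K)`, so it suffices to find `w ≠ 0` with
`w · D(p_K) ⊆ D(q_K)`.

Write `K = F(p)` as generated by `y, x₁, …, xₙ` with `p₀ y² = ∑ pᵢ xᵢ² + p_top` and the `xᵢ`
algebraically independent. After clearing denominators an isotropic vector of `q_K` has
entries `eⱼ(x) + fⱼ(x) y` with polynomials `eⱼ, fⱼ`. With `E = ∑ qⱼ eⱼ⁽²⁾` and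
`W = ∑ qⱼ fⱼ⁽²⁾`, where `g⁽²⁾` squares the coefficients of `g` (so `g⁽²⁾(x²) = g(x)²`),
isotropy becomes the polynomial identity `p₀ E = (∑ pᵢ Xᵢ + p_top) W`. Then `w = W(x²) / p₀`
works: `p₀ w = q(f(x))`, differentiating the identity in `Xᵢ` gives
`pᵢ w = q(∂ᵢe(x) + ∂ᵢf(x) y)`, and `p_top w = y² p₀ w + ∑ xᵢ² pᵢ w`. Finally `W ≠ 0`, as the
coefficients of `E` and `W` are values of the anisotropic form `q`, so `w ≠ 0` by independence.
-/

theorem AlgebraicIndependent.pow {R A ι : Type*} [CommRing R] [CommRing A] [Algebra R A]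
    {x : ι → A} (hx : AlgebraicIndependent R x) {k : ℕ} (hk : 0 < k) :
    AlgebraicIndependent R (x ^ k) := by
  rw [AlgebraicIndependent, ← MvPolynomial.aeval_comp_expand, AlgHom.coe_comp]
  exact Function.Injective.comp hx (MvPolynomial.expand_injective hk)

namespace QLin

open Module MvPolynomial

lemma Anis.ne_zero {K : Type} [Field K] {n : ℕ} {d : Fin n → K} (hd : Anis K d) (i : Fin n) :
    d i ≠ 0 := by
  intro h
  have := congr_fun (hd (Pi.single i 1) (by simp [qf, Pi.single_apply, h])) i
  simp at this

lemma qf_smul {K : Type} [Field K] {n : ℕ} (d v : Fin n → K) (c : K) :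
    qf K d (c • v) = c ^ 2 * qf K d v := by
  simp only [qf, Finset.mul_sum, Pi.smul_apply, smul_eq_mul]
  exact Finset.sum_congr rfl fun j _ => by ring

/-- `K` as a module over itself through Frobenius, `a • z = a ^ 2 * z`. -/
def FrobeniusTwist (K : Type) : Type := K

section FrobeniusTwist

variable {K : Type} [Field K] [CharP K 2] {n m : ℕ}

instance : AddCommGroup (FrobeniusTwist K) := inferInstanceAs (AddCommGroup K)

noncomputable instance : Module K (FrobeniusTwist K) := Module.compHom K (frobenius K 2)

def toFrobeniusTwist : K ≃+ FrobeniusTwist K := AddEquiv.refl K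

lemma smul_toFrobeniusTwist (a z : K) :
    a • toFrobeniusTwist z = toFrobeniusTwist (a ^ 2 * z) := rfl

noncomputable def qfLin (d : Fin n → K) : (Fin n → K) →ₗ[K] FrobeniusTwist K :=
  Fintype.linearCombination K fun i => toFrobeniusTwist (d i)

lemma qfLin_apply (d v : Fin n → K) : qfLin d v = toFrobeniusTwist (qf K d v) := by
  simp [qfLin, Fintype.linearCombination_apply, smul_toFrobeniusTwist, qf, mul_comm]

lemma mem_Dset_iff (d : Fin n → K) (z : K) :
    z ∈ Dset K d ↔ toFrobeniusTwist z ∈ LinearMap.range (qfLin d) := by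
  simp [Dset, qfLin_apply]

lemma qf_add_mul (d a b : Fin n → K) (c : K) :
    qf K d (fun j => a j + b j * c) = qf K d a + c ^ 2 * qf K d b := by
  simp only [qf, CharTwo.add_sq, mul_pow, Finset.mul_sum, ← Finset.sum_add_distrib]
  exact Finset.sum_congr rfl fun j _ => by ring

lemma i0_eq_finrank_ker (d : Fin n → K) : i0 K d = finrank K (LinearMap.ker (qfLin d)) := by
  refine IsGreatest.csSup_eq ⟨⟨_, fun v hv => ?_, rfl⟩, ?_⟩
  · simpa [qfLin_apply] using hv
  · rintro _ ⟨W, hW, rfl⟩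
    exact Submodule.finrank_mono fun v hv => by simp [qfLin_apply, hW v hv]

lemma finrank_range_qfLin_add_i0 (d : Fin n → K) :
    finrank K (LinearMap.range (qfLin d)) + i0 K d = n := by
  rw [i0_eq_finrank_ker, LinearMap.finrank_range_add_finrank_ker, finrank_fin_fun]

noncomputable def mulFrobeniusTwist (w : K) : FrobeniusTwist K →ₗ[K] FrobeniusTwist K where
  toFun z := toFrobeniusTwist (w * toFrobeniusTwist.symm z)
  map_add' _ _ := by simp [mul_add]
  map_smul' a z := by
    change toFrobeniusTwist (w * (a ^ 2 * toFrobeniusTwist.symm z)) =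
      toFrobeniusTwist (a ^ 2 * (w * toFrobeniusTwist.symm z))
    rw [mul_left_comm]

lemma mulFrobeniusTwist_injective {w : K} (hw : w ≠ 0) : Function.Injective (mulFrobeniusTwist w) :=
  fun _ _ h => toFrobeniusTwist.symm.injective (mul_left_cancel₀ hw (toFrobeniusTwist.injective h))

lemma finrank_range_qfLin_le (d : Fin n → K) (e : Fin m → K) {w : K} (hw : w ≠ 0)
    (h : ∀ i, d i * w ∈ Dset K e) :
    finrank K (LinearMap.range (qfLin d)) ≤ finrank K (LinearMap.range (qfLin e)) := by
  have hmap : (LinearMap.range (qfLin d)).map (mulFrobeniusTwist w) ≤ LinearMap.range (qfLin e) := by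
    rw [qfLin, Fintype.range_linearCombination, Submodule.map_span, Submodule.span_le]
    rintro _ ⟨_, ⟨i, rfl⟩, rfl⟩
    obtain ⟨v, hv⟩ := h i
    exact ⟨v, by rw [qfLin_apply, hv, mul_comm]; rfl⟩
  calc finrank K (LinearMap.range (qfLin d))
      = finrank K ((LinearMap.range (qfLin d)).map (mulFrobeniusTwist w)) :=
        (Submodule.equivMapOfInjective _ (mulFrobeniusTwist_injective hw) _).finrank_eq
    _ ≤ finrank K (LinearMap.range (qfLin e)) := Submodule.finrank_mono hmap

theorem i0_le_of_mul_mem_Dset (d : Fin n → K) (e : Fin m → K) {w : K} (hw : w ≠ 0)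
    (h : ∀ i, d i * w ∈ Dset K e) : (i0 K e : ℤ) ≤ m - n + i0 K d := by
  have := finrank_range_qfLin_le d e hw h
  have := finrank_range_qfLin_add_i0 d
  have := finrank_range_qfLin_add_i0 e
  omega

end FrobeniusTwist

section TwistedValue

variable {F K : Type} [Field F] [Field K] [Algebra F K] [CharP F 2] {σ : Type*} {m : ℕ}

/-- `∑ qⱼ gⱼ⁽²⁾`, where `g⁽²⁾` squares the coefficients of `g`. Unlike `∑ qⱼ gⱼ²`, whose partial
derivatives vanish in characteristic `2`, it can be usefully differentiated. -/
noncomputable def twistedQf (q : Fin m → F) (g : Fin m → MvPolynomial σ F) : MvPolynomial σ F :=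
  ∑ j, C (q j) * map (frobenius F 2) (g j)

lemma coeff_twistedQf (q : Fin m → F) (g : Fin m → MvPolynomial σ F) (β : σ →₀ ℕ) :
    (twistedQf q g).coeff β = qf F q fun j => (g j).coeff β := by
  simp [twistedQf, qf, coeff_sum, coeff_C_mul, coeff_map, frobenius_def]

lemma eq_zero_of_twistedQf_eq_zero {q : Fin m → F} (hq : Anis F q)
    {g : Fin m → MvPolynomial σ F} (h : twistedQf q g = 0) : g = 0 := by
  funext j
  ext β
  have := congr_fun (hq _ (by rw [← coeff_twistedQf q g β, h, coeff_zero])) j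
  simpa using this

lemma pderiv_twistedQf [DecidableEq σ] (q : Fin m → F) (g : Fin m → MvPolynomial σ F) (i : σ) :
    pderiv i (twistedQf q g) = twistedQf q fun j => pderiv i (g j) := by
  simp [twistedQf, pderiv_map]

variable [CharP K 2]

lemma aeval_sq_map_frobenius (z : σ → K) (g : MvPolynomial σ F) :
    aeval (z ^ 2) (map (frobenius F 2) g) = aeval z g ^ 2 := by
  have : (aeval (z ^ 2)).toRingHom.comp (map (frobenius F 2)) =
      (frobenius K 2).comp (aeval z).toRingHom := by
    ext <;> simp [frobenius_def]
  exact (RingHom.congr_fun this g).trans (frobenius_def 2 _)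

lemma aeval_sq_twistedQf (q : Fin m → F) (g : Fin m → MvPolynomial σ F) (z : σ → K) :
    aeval (z ^ 2) (twistedQf q g) = qf K (bc F K q) fun j => aeval z (g j) := by
  simp [twistedQf, qf, bc, aeval_sq_map_frobenius]

end TwistedValue

section FunctionField

variable {F K : Type} [Field F] [Field K] [Algebra F K] {n m : ℕ}

lemma aeval_chartD (p : Fin (n + 2) → F) (x : Fin (n + 1) → K) :
    aeval x (chartD F p) = ∑ i, bc F K p i.castSucc * x i ^ 2 + bc F K p (Fin.last _) := by
  simp [chartD, bc]

lemma degreeOf_zero_rename_succ (Λ : MvPolynomial (Fin n) F) :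
    degreeOf 0 (rename Fin.succ Λ) = 0 := by
  classical
  refine Nat.lt_one_iff.1 ((degreeOf_lt_iff one_pos).2 fun s hs => ?_)
  rw [support_rename_of_injective (Fin.succ_injective _), Finset.mem_image] at hs
  obtain ⟨t, -, rfl⟩ := hs
  simp [Finsupp.mapDomain_of_notMem_range]

lemma two_le_degreeOf_zero_chartD {p : Fin (n + 2) → F} (hp0 : p 0 ≠ 0) :
    2 ≤ degreeOf 0 (chartD F p) := by
  classical
  have : Finsupp.single 0 2 ∈ (chartD F p).support := by
    rw [MvPolynomial.mem_support_iff]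
    simp [chartD, coeff_sum, coeff_C_mul, coeff_X_pow, coeff_C, Fin.sum_univ_succ,
      Finsupp.single_left_inj, Fin.succ_ne_zero, eq_comm (a := (0 : Fin (n + 1) →₀ ℕ)), hp0]
  simpa using le_degreeOf_of_mem_support 0 this

theorem algebraicIndependent_tail {p : Fin (n + 2) → F} (hp0 : p 0 ≠ 0) {x : Fin (n + 1) → K}
    (hker : RingHom.ker (aeval x : MvPolynomial (Fin (n + 1)) F →ₐ[F] K) =
      Ideal.span {chartD F p}) :
    AlgebraicIndependent F (Fin.tail x) := by
  refine algebraicIndependent_iff.2 fun Λ hΛ => ?_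
  have hmem : rename Fin.succ Λ ∈ RingHom.ker (aeval x) := by
    rw [RingHom.mem_ker]
    exact (aeval_rename _ _ _).trans hΛ
  rw [hker, Ideal.mem_span_singleton] at hmem
  obtain ⟨c, hc⟩ := hmem
  have hdeg := two_le_degreeOf_zero_chartD hp0
  by_cases hc0 : c = 0
  · exact rename_injective _ (Fin.succ_injective _) (by simp [hc, hc0])
  · have hD : chartD F p ≠ 0 := by
      rintro h
      simp [h] at hdeg
    have := degreeOf_mul_eq (n := 0) hD hc0
    rw [← hc, degreeOf_zero_rename_succ] at this
    omega

lemma exists_aeval_eq_add_mul {R A : Type*} [CommRing R] [CommRing A] [Algebra R A]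
    {x : Fin (n + 1) → A} (hsq : ∃ r : MvPolynomial (Fin n) R, aeval (Fin.tail x) r = x 0 ^ 2)
    (g : MvPolynomial (Fin (n + 1)) R) :
    ∃ e f : MvPolynomial (Fin n) R,
      aeval x g = aeval (Fin.tail x) e + aeval (Fin.tail x) f * x 0 := by
  obtain ⟨r, hr⟩ := hsq
  induction g using MvPolynomial.induction_on with
  | C a => exact ⟨C a, 0, by simp⟩
  | add g g' ih ih' =>
    obtain ⟨e, f, h⟩ := ih
    obtain ⟨e', f', h'⟩ := ih'
    exact ⟨e + e', f + f', by simp only [map_add, h, h']; ring⟩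
  | mul_X g i ih =>
    obtain ⟨e, f, h⟩ := ih
    induction i using Fin.cases with
    | zero => exact ⟨f * r, e, by simp only [map_mul, aeval_X, h, hr]; ring⟩
    | succ j => exact ⟨e * X j, f * X j, by simp only [map_mul, aeval_X, h, Fin.tail]; ring⟩

lemma exists_ne_zero_mul_mem_range {R A ι : Type*} [CommRing R] [Field A] [Algebra R A]
    {x : ι → A}
    (hgen : ∀ z : A, ∃ a b : MvPolynomial ι R, aeval x b ≠ 0 ∧ z * aeval x b = aeval x a)
    (v : Fin m → A) :
    ∃ B ≠ 0, ∀ j, B * v j ∈ (aeval x : MvPolynomial ι R →ₐ[R] A).range := by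
  choose a b hb hab using hgen
  refine ⟨∏ j, aeval x (b (v j)), Finset.prod_ne_zero_iff.2 fun j _ => hb (v j), fun j => ?_⟩
  rw [← Finset.mul_prod_erase _ _ (Finset.mem_univ j), mul_right_comm, mul_comm _ (v j), hab]
  exact Subalgebra.mul_mem _ ⟨_, rfl⟩ (Subalgebra.prod_mem _ fun j' _ => ⟨_, rfl⟩)

/-- `chartD F p = C (p 0) * X 0 ^ 2 + rename Fin.succ (expand 2 (chartTailRoot p))`. -/
noncomputable def chartTailRoot (p : Fin (n + 2) → F) : MvPolynomial (Fin n) F :=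
  ∑ κ, C (p κ.succ.castSucc) * X κ + C (p (Fin.last (n + 1)))

lemma pderiv_chartTailRoot (p : Fin (n + 2) → F) (κ : Fin n) :
    pderiv κ (chartTailRoot p) = C (p κ.succ.castSucc) := by
  classical
  simp [chartTailRoot, pderiv_X, Pi.single_apply]

variable [CharP K 2] {p : Fin (n + 2) → F} {x : Fin (n + 1) → K}

lemma bc_last_eq (hrel : aeval x (chartD F p) = 0) :
    bc F K p (Fin.last _) =
      bc F K p 0 * x 0 ^ 2 + ∑ κ, bc F K p κ.succ.castSucc * Fin.tail x κ ^ 2 := by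
  rw [aeval_chartD, Fin.sum_univ_succ, Fin.castSucc_zero, CharTwo.add_eq_zero] at hrel
  exact hrel.symm

lemma aeval_sq_chartTailRoot (hrel : aeval x (chartD F p) = 0) :
    aeval (Fin.tail x ^ 2) (chartTailRoot p) = bc F K p 0 * x 0 ^ 2 := by
  have hlast := bc_last_eq hrel
  simp only [bc] at hlast ⊢
  simp only [chartTailRoot, map_add, map_sum, map_mul, aeval_C, aeval_X, Pi.pow_apply, hlast]
  rw [add_left_comm, CharTwo.add_self_eq_zero, add_zero]

lemma exists_isotropic_aeval_add_mul (hp0 : p 0 ≠ 0) (hrel : aeval x (chartD F p) = 0)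
    (hgen : ∀ z : K, ∃ a b : MvPolynomial (Fin (n + 1)) F,
      aeval x b ≠ 0 ∧ z * aeval x b = aeval x a)
    {d : Fin m → K} {v : Fin m → K} (hv0 : v ≠ 0) (hv : qf K d v = 0) :
    ∃ e f : Fin m → MvPolynomial (Fin n) F,
      (fun j => aeval (Fin.tail x) (e j) + aeval (Fin.tail x) (f j) * x 0) ≠ 0 ∧
      qf K d (fun j => aeval (Fin.tail x) (e j) + aeval (Fin.tail x) (f j) * x 0) = 0 := by
  have hsq : ∃ r : MvPolynomial (Fin n) F, aeval (Fin.tail x) r = x 0 ^ 2 := by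
    refine ⟨C (p 0)⁻¹ * expand 2 (chartTailRoot p), ?_⟩
    rw [map_mul, aeval_expand, aeval_sq_chartTailRoot hrel, aeval_C, ← mul_assoc, bc, ← map_mul,
      inv_mul_cancel₀ hp0, map_one, one_mul]
  obtain ⟨B, hB, hBv⟩ := exists_ne_zero_mul_mem_range hgen v
  choose a ha using hBv
  choose e f hef using fun j => exists_aeval_eq_add_mul hsq (a j)
  have hvec : (fun j => aeval (Fin.tail x) (e j) + aeval (Fin.tail x) (f j) * x 0) = B • v := by
    funext j
    rw [← hef]
    exact ha j
  refine ⟨e, f, ?_, ?_⟩ <;> rw [hvec]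
  · exact smul_ne_zero hB hv0
  · rw [qf_smul, hv, mul_zero]

end FunctionField

section Core

variable {F K : Type} [Field F] [Field K] [Algebra F K] [CharP F 2] [CharP K 2] {n m : ℕ}
variable {p : Fin (n + 2) → F} {x : Fin (n + 1) → K} {q : Fin m → F}
variable {e f : Fin m → MvPolynomial (Fin n) F}

lemma C_mul_twistedQf_eq (hrel : aeval x (chartD F p) = 0)
    (hind : AlgebraicIndependent F (Fin.tail x ^ 2))
    (hiso : qf K (bc F K q)
      (fun j => aeval (Fin.tail x) (e j) + aeval (Fin.tail x) (f j) * x 0) = 0) :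
    C (p 0) * twistedQf q e = chartTailRoot p * twistedQf q f := by
  apply hind
  rw [qf_add_mul, CharTwo.add_eq_zero] at hiso
  simp only [map_mul, aeval_C, aeval_sq_twistedQf, aeval_sq_chartTailRoot hrel, hiso]
  simp only [bc]
  ring

lemma mul_aeval_sq_twistedQf_eq (hrel : aeval x (chartD F p) = 0)
    (hident : C (p 0) * twistedQf q e = chartTailRoot p * twistedQf q f) (κ : Fin n) :
    bc F K p κ.succ.castSucc * aeval (Fin.tail x ^ 2) (twistedQf q f) =
      bc F K p 0 * qf K (bc F K q) (fun j =>
        aeval (Fin.tail x) (pderiv κ (e j)) + aeval (Fin.tail x) (pderiv κ (f j)) * x 0) := by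
  classical
  have h := congrArg (fun g => aeval (Fin.tail x ^ 2) (pderiv κ g)) hident
  simp only [Derivation.leibniz, pderiv_C, pderiv_twistedQf, pderiv_chartTailRoot, smul_eq_mul,
    map_add, map_mul, mul_zero, add_zero, aeval_C, aeval_sq_twistedQf,
    aeval_sq_chartTailRoot hrel] at h
  rw [aeval_sq_twistedQf, qf_add_mul]
  simp only [bc] at h ⊢
  linear_combination (norm := ring_nf) -h
  simp [CharTwo.two_eq_zero]

theorem exists_mul_mem_Dset (hp0 : p 0 ≠ 0) (hq : Anis F q) (hrel : aeval x (chartD F p) = 0)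
    (hind : AlgebraicIndependent F (Fin.tail x ^ 2))
    (hne : (fun j => aeval (Fin.tail x) (e j) + aeval (Fin.tail x) (f j) * x 0) ≠ 0)
    (hiso : qf K (bc F K q)
      (fun j => aeval (Fin.tail x) (e j) + aeval (Fin.tail x) (f j) * x 0) = 0) :
    ∃ w ≠ 0, ∀ i, bc F K p i * w ∈ Dset K (bc F K q) := by
  have hident := C_mul_twistedQf_eq hrel hind hiso
  have hP0 : bc F K p 0 ≠ 0 := (map_ne_zero _).2 hp0
  have hf : twistedQf q f ≠ 0 := by
    intro hf
    have he : twistedQf q e = 0 := by simpa [hf, hp0] using hident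
    refine hne (funext fun j => ?_)
    simp [eq_zero_of_twistedQf_eq_zero hq he, eq_zero_of_twistedQf_eq_zero hq hf]
  set w := aeval (Fin.tail x ^ 2) (twistedQf q f) / bc F K p 0
  have hw0 : bc F K p 0 * w ∈ Dset K (bc F K q) :=
    ⟨_, by rw [mul_div_cancel₀ _ hP0, aeval_sq_twistedQf]⟩
  have hwκ (κ : Fin n) : bc F K p κ.succ.castSucc * w ∈ Dset K (bc F K q) :=
    ⟨_, by rw [mul_div_assoc', mul_aeval_sq_twistedQf_eq hrel hident, mul_div_cancel_left₀ _ hP0]⟩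
  refine ⟨w, div_ne_zero (fun h => hf (hind.eq_zero_of_aeval_eq_zero _ h)) hP0, fun i => ?_⟩
  induction i using Fin.lastCases with
  | last =>
    have hlast : bc F K p (Fin.last _) * w =
        x 0 ^ 2 * (bc F K p 0 * w) + ∑ κ, Fin.tail x κ ^ 2 * (bc F K p κ.succ.castSucc * w) := by
      rw [bc_last_eq hrel, add_mul, Finset.sum_mul]
      congr 1 <;> [ring; exact Finset.sum_congr rfl fun κ _ => by ring]
    simp only [mem_Dset_iff, hlast, map_add, map_sum, ← smul_toFrobeniusTwist] at hw0 hwκ ⊢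
    exact add_mem (Submodule.smul_mem _ _ hw0)
      (Submodule.sum_mem _ fun κ _ => Submodule.smul_mem _ _ (hwκ κ))
  | cast i =>
    induction i using Fin.cases with
    | zero => exact hw0
    | succ κ => exact hwκ κ

end Core

end QLin

open QLin in
/-- **Totaro.** Let `p` and `q` be anisotropic quasilinear quadratic forms
of dimension `≥ 2` over a field `F` of characteristic `2`. If `q_{F(p)}` is isotropic,
then `i₀(q_{F(p)}) ≤ dim q − dim p + i₁(p)`. -/
theorem statement12 (F : Type) [Field F] (h2 : (2 : F) = 0) {np nq : ℕ}
    (p : Fin (np + 2) → F) (q : Fin (nq + 2) → F) (hp : Anis F p) (hq : Anis F q)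
    (K : Type) [Field K] [Algebra F K] (hK : IsFunFld F p K)
    (hiso : ¬ Anis K (bc F K q)) :
    (i0 K (bc F K q) : ℤ) ≤ (nq + 2 : ℤ) - (np + 2) + i0 K (bc F K p) := by
  have : CharP F 2 := CharTwo.of_one_ne_zero_of_two_eq_zero one_ne_zero h2
  have : CharP K 2 := charP_of_injective_algebraMap (algebraMap F K).injective 2
  obtain ⟨x, hker, hgen⟩ := hK
  have hrel : MvPolynomial.aeval x (chartD F p) = 0 := by
    rw [← RingHom.mem_ker, hker]
    exact Ideal.subset_span rfl
  obtain ⟨v, hv, hv0⟩ : ∃ v, qf K (bc F K q) v = 0 ∧ v ≠ 0 := by simpa [Anis] using hiso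
  obtain ⟨e, f, hne, hiso'⟩ := exists_isotropic_aeval_add_mul (hp.ne_zero 0) hrel hgen hv0 hv
  obtain ⟨w, hw, hmem⟩ := exists_mul_mem_Dset (hp.ne_zero 0) hq hrel
    ((algebraicIndependent_tail (hp.ne_zero 0) hker).pow two_pos) hne hiso'
  exact_mod_cast i0_le_of_mul_mem_Dset (bc F K p) (bc F K q) hw hmem
end
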